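/- Fix integers 3 ≤ l < r and p ∈ (0,1). For ρ ∈ [0,1] define α^BSC(ρ,0) = max_{(x₀,x_c,y)∈D(ρ)} [f(x₀,x_c,y,ρ) + k(x₀,x_c,ρ,p)]. Suppose α^BSC(ρ,0) = 0 and the maximum is achieved only at the point (0,0,0). Then there exists N such that for all n ≥ N and all δ ∈ [−√(ln n / n), √(ln n / n)] with ρ + δ ∈ [0,1], one has α^BSC(ρ+δ,0) = 0. -/

import Mathlib

open Finset

noncomputable section

/-- Binary entropy in nats, with the convention `0 * log 0 = 0`
(automatic since `Real.log 0 = 0`). -/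
def h2 (x : ℝ) : ℝ := -x * Real.log x - (1 - x) * Real.log (1 - x)

/-- Membership in the domain `D(ρ) ⊆ [0,1]^{2+⌊r/2⌋}`.  The coordinate `y t`
for `t : Fin (r/2)` represents `y_{t+1}`, the fraction of check nodes of
induced degree `2*(t+1)`. -/
def memD (r : ℕ) (ρ x₀ xc : ℝ) (y : Fin (r / 2) → ℝ) : Prop :=
  x₀ ∈ Set.Icc (0 : ℝ) 1 ∧ xc ∈ Set.Icc (0 : ℝ) 1 ∧ (∀ t, y t ∈ Set.Icc (0 : ℝ) 1) ∧
    (∑ t, y t) ≤ 1 ∧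
    (∑ t : Fin (r / 2), (2 * ((t : ℕ) + 1) : ℝ) / (r : ℝ) * y t) = (1 - ρ) * x₀ + ρ * xc

/-- The growth-rate function `f(x₀, x_c, y, ρ)`. -/
def fFun (l r : ℕ) (x₀ xc : ℝ) (y : Fin (r / 2) → ℝ) (ρ : ℝ) : ℝ :=
  -(l : ℝ) * h2 ((1 - ρ) * x₀ + ρ * xc) + (1 - ρ) * h2 x₀ + ρ * h2 xc
    - (l : ℝ) / (r : ℝ) * ((1 - ∑ t, y t) * Real.log (1 - ∑ t, y t))
    - (l : ℝ) / (r : ℝ) * ∑ t, y t * Real.log (y t)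
    + (l : ℝ) / (r : ℝ) *
        ∑ t : Fin (r / 2), y t * Real.log (Nat.choose r (2 * ((t : ℕ) + 1)))

/-- The auxiliary function `k(x₀, x_c, ρ, p) = (ρ x_c - (1-ρ) x₀) ln((1-p)/p)`. -/
def kFun (x₀ xc ρ p : ℝ) : ℝ := (ρ * xc - (1 - ρ) * x₀) * Real.log ((1 - p) / p)

/-- The leading exponent of the loop series for the BSC:
`α^BSC(ρ,η) = max_{(x₀,x_c,y) ∈ D(ρ)} [f + k - 2η((1-ρ)x₀ + ρ x_c)]`,
formalized as a supremum over the (compact) domain `D(ρ)`. -/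
def alphaBSC (l r : ℕ) (p ρ η : ℝ) : ℝ :=
  sSup {z : ℝ | ∃ (x₀ xc : ℝ) (y : Fin (r / 2) → ℝ), memD r ρ x₀ xc y ∧
    z = fFun l r x₀ xc y ρ + kFun x₀ xc ρ p - 2 * η * ((1 - ρ) * x₀ + ρ * xc)}

/-!
Write `s = ∑ₜ yₜ`. On `D(ρ')` one has `2s/r ≤ (1-ρ')x₀ + ρ'x_c ≤ s`, and concavity of `h₂`
together with `-u ln u ≤ s - u ln s` bounds the objective by `s ((l-2)/r · ln s + C)`
uniformly in `ρ' ∈ [0,1]`; as `l ≥ 3` this is `≤ 0` once `s ≤ ε`. The part of the graph of `D`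
with `s ≥ ε` and nonnegative objective is compact, and by uniqueness of the maximiser it
misses the fibre over `ρ`, hence also the fibres over a neighbourhood of `ρ`, which contains
`ρ + δ` as soon as `√(ln n / n)` is small.
-/

open Filter Topology Real

lemma h2_eq_binEntropy (x : ℝ) : h2 x = binEntropy x := by
  rw [h2, binEntropy, log_inv, log_inv]; ring

@[fun_prop]
lemma continuous_h2 : Continuous h2 := by
  rw [show h2 = binEntropy from funext h2_eq_binEntropy]
  exact binEntropy_continuous

@[simp]
lemma fFun_add_kFun_zero (l r : ℕ) (ρ p : ℝ) : fFun l r 0 0 0 ρ + kFun 0 0 ρ p = 0 := by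
  simp [fFun, kFun, h2]

lemma neg_h2_le_mul_log {m : ℝ} (h₀ : 0 ≤ m) (h₁ : m ≤ 1) : -h2 m ≤ m * log m := by
  have := mul_log_nonpos (sub_nonneg.2 h₁) (by linarith : 1 - m ≤ 1)
  rw [h2]; linarith

lemma mul_log_le_mul_log_of_le {a m s : ℝ} (ha : 0 ≤ a) (ham : a ≤ m) (hms : m ≤ s)
    (hs : s ≤ 1) : m * log m ≤ a * log s := by
  have hlog_s : log s ≤ 0 := log_nonpos (ha.trans (ham.trans hms)) hs
  calc m * log m ≤ m * log s := by
        rcases (ha.trans ham).eq_or_lt with rfl | hm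
        · simp
        · exact mul_le_mul_of_nonneg_left (log_le_log hm hms) hm.le
    _ ≤ a * log s := mul_le_mul_of_nonpos_right ham hlog_s

lemma neg_mul_log_le_sub_mul_log {y s : ℝ} (hy : 0 ≤ y) (hys : y ≤ s) :
    -(y * log y) ≤ s - y * log s := by
  rcases hy.eq_or_lt with rfl | hy
  · simpa using hys
  have hs : 0 < s := hy.trans_le hys
  -- `u ln u ≥ u - 1` at `u = y / s`
  have key :=
    mul_le_mul_of_nonneg_left (self_sub_one_le_mul_log (div_nonneg hy.le hs.le)) hs.le
  rw [log_div hy.ne' hs.ne'] at key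
  field_simp at key
  nlinarith

lemma neg_one_sub_mul_log_one_sub_le {s : ℝ} (hs : s ≤ 1) :
    -((1 - s) * log (1 - s)) ≤ s := by
  have := negMulLog_le_one_sub_self (sub_nonneg.2 hs)
  rw [negMulLog, neg_mul] at this
  linarith

lemma log_choose_le (n k : ℕ) (hk : k ≤ n) : log (n.choose k) ≤ n * log 2 := by
  rw [← log_pow]
  exact log_le_log (by exact_mod_cast Nat.choose_pos hk)
    (by exact_mod_cast Nat.choose_le_two_pow n k)

section Domain

variable {r : ℕ} {ρ x₀ xc : ℝ} {y : Fin (r / 2) → ℝ}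

lemma two_div_mul_sum_le_of_memD (hD : memD r ρ x₀ xc y) :
    2 / r * ∑ t, y t ≤ (1 - ρ) * x₀ + ρ * xc := by
  rw [← hD.2.2.2.2, Finset.mul_sum]
  refine Finset.sum_le_sum fun t _ => mul_le_mul_of_nonneg_right ?_ (hD.2.2.1 t).1
  exact div_le_div_of_nonneg_right (by linarith [(Nat.cast_nonneg t : (0 : ℝ) ≤ t)])
    (Nat.cast_nonneg r)

lemma le_sum_of_memD (hD : memD r ρ x₀ xc y) : (1 - ρ) * x₀ + ρ * xc ≤ ∑ t, y t := by
  rw [← hD.2.2.2.2]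
  refine Finset.sum_le_sum fun t _ => mul_le_of_le_one_left (hD.2.2.1 t).1 ?_
  have : 2 * ((t : ℕ) + 1) ≤ r := by omega
  exact div_le_one_of_le₀ (by exact_mod_cast this) (Nat.cast_nonneg r)

end Domain

lemma neg_mul_h2_add_h2_le {l ρ x₀ xc : ℝ} (hl : 1 ≤ l) (hρ : ρ ∈ Set.Icc 0 1)
    (hx₀ : x₀ ∈ Set.Icc 0 1) (hxc : xc ∈ Set.Icc 0 1) :
    -l * h2 ((1 - ρ) * x₀ + ρ * xc) + (1 - ρ) * h2 x₀ + ρ * h2 xc ≤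
      (l - 1) * (((1 - ρ) * x₀ + ρ * xc) * log ((1 - ρ) * x₀ + ρ * xc)) := by
  set m := (1 - ρ) * x₀ + ρ * xc
  have hm : m ∈ Set.Icc 0 1 :=
    convex_Icc 0 1 hx₀ hxc (sub_nonneg.2 hρ.2) hρ.1 (sub_add_cancel 1 ρ)
  have hjensen : (1 - ρ) * h2 x₀ + ρ * h2 xc ≤ h2 m := by
    simpa only [h2_eq_binEntropy, smul_eq_mul] using strictConcave_binEntropy.concaveOn.2
      hx₀ hxc (sub_nonneg.2 hρ.2) hρ.1 (sub_add_cancel 1 ρ)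
  have := mul_le_mul_of_nonneg_left (neg_h2_le_mul_log hm.1 hm.2) (sub_nonneg.2 hl)
  linarith

lemma kFun_le {ρ x₀ xc s : ℝ} (p : ℝ) (hρ : ρ ∈ Set.Icc 0 1) (hx₀ : 0 ≤ x₀) (hxc : 0 ≤ xc)
    (hs : (1 - ρ) * x₀ + ρ * xc ≤ s) : kFun x₀ xc ρ p ≤ s * |log ((1 - p) / p)| := by
  have h₀ := mul_nonneg (sub_nonneg.2 hρ.2) hx₀
  have hc := mul_nonneg hρ.1 hxc
  calc kFun x₀ xc ρ p ≤ |ρ * xc - (1 - ρ) * x₀| * |log ((1 - p) / p)| := by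
        rw [kFun, ← abs_mul]; exact le_abs_self _
    _ ≤ s * |log ((1 - p) / p)| := by
        gcongr; rw [abs_sub_le_iff]; constructor <;> linarith

lemma neg_sum_mul_log_le {ι : Type*} [Fintype ι] {y : ι → ℝ} (hy : ∀ t, 0 ≤ y t) :
    -∑ t, y t * log (y t) ≤ Fintype.card ι * ∑ t, y t - (∑ t, y t) * log (∑ t, y t) := by
  have hle : ∀ t, y t ≤ ∑ t, y t := fun t =>
    Finset.single_le_sum (fun i _ => hy i) (Finset.mem_univ t)
  calc -∑ t, y t * log (y t) = ∑ t, -(y t * log (y t)) := by rw [Finset.sum_neg_distrib]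
    _ ≤ ∑ t, ((∑ t, y t) - y t * log (∑ t, y t)) :=
        Finset.sum_le_sum fun t _ => neg_mul_log_le_sub_mul_log (hy t) (hle t)
    _ = _ := by rw [Finset.sum_sub_distrib, ← Finset.sum_mul]; simp

lemma sum_mul_log_choose_le {r : ℕ} {y : Fin (r / 2) → ℝ} (hy : ∀ t, 0 ≤ y t) :
    ∑ t : Fin (r / 2), y t * log (r.choose (2 * ((t : ℕ) + 1))) ≤ (∑ t, y t) * (r * log 2) := by
  rw [Finset.sum_mul]
  exact Finset.sum_le_sum fun t _ =>
    mul_le_mul_of_nonneg_left (log_choose_le r _ (by omega)) (hy t)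

def nearOriginConst (l r : ℕ) (p : ℝ) : ℝ :=
  l / r * (1 + (r / 2 : ℕ)) + l * log 2 + |log ((1 - p) / p)|

lemma fFun_add_kFun_le {l r : ℕ} (hl : 1 ≤ l) (hr : 0 < r) (p : ℝ) {ρ x₀ xc : ℝ}
    {y : Fin (r / 2) → ℝ} (hρ : ρ ∈ Set.Icc 0 1) (hD : memD r ρ x₀ xc y) :
    fFun l r x₀ xc y ρ + kFun x₀ xc ρ p ≤
      (∑ t, y t) * ((l - 2) / r * log (∑ t, y t) + nearOriginConst l r p) := by
  have ⟨hx₀, hxc, hy, hs₁, _⟩ := hD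
  have hl' : (1 : ℝ) ≤ l := by exact_mod_cast hl
  have hy₀ : ∀ t, 0 ≤ y t := fun t => (hy t).1
  have hlr : (0 : ℝ) ≤ l / r := by positivity
  have hentropy := (neg_mul_h2_add_h2_le hl' hρ hx₀ hxc).trans
    (mul_le_mul_of_nonneg_left (mul_log_le_mul_log_of_le
      (mul_nonneg (by positivity) (Finset.sum_nonneg fun t _ => hy₀ t))
      (two_div_mul_sum_le_of_memD hD) (le_sum_of_memD hD) hs₁) (sub_nonneg.2 hl'))
  have hfree := mul_le_mul_of_nonneg_left (neg_one_sub_mul_log_one_sub_le hs₁) hlr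
  have hlog := mul_le_mul_of_nonneg_left (neg_sum_mul_log_le hy₀) hlr
  have hchoose := mul_le_mul_of_nonneg_left (sum_mul_log_choose_le hy₀) hlr
  have hk := kFun_le p hρ hx₀.1 hxc.1 (le_sum_of_memD hD)
  simp only [Fintype.card_fin] at hlog
  rw [fFun, nearOriginConst]
  have hr' : (r : ℝ) ≠ 0 := by positivity
  have hcancel : (l : ℝ) / r * ((∑ t, y t) * (r * log 2)) = (∑ t, y t) * (l * log 2) := by
    field_simp
  linear_combination hentropy + hfree + hlog + hchoose + hk + hcancel

lemma exists_pos_forall_fFun_add_kFun_nonpos {l r : ℕ} (hl : 3 ≤ l) (hr : 0 < r) (p : ℝ) :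
    ∃ ε > 0, ∀ ρ x₀ xc (y : Fin (r / 2) → ℝ), ρ ∈ Set.Icc 0 1 → memD r ρ x₀ xc y →
      ∑ t, y t ≤ ε → fFun l r x₀ xc y ρ + kFun x₀ xc ρ p ≤ 0 := by
  have hl₂ : (0 : ℝ) < l - 2 := by
    have : (3 : ℝ) ≤ l := by exact_mod_cast hl
    linarith
  have hr' : (0 : ℝ) < r := by exact_mod_cast hr
  refine ⟨exp (-(nearOriginConst l r p * r / (l - 2))), exp_pos _, ?_⟩
  intro ρ x₀ xc y hρ hD hε
  refine (fFun_add_kFun_le (by omega) hr p hρ hD).trans ?_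
  rcases (Finset.sum_nonneg fun t _ => (hD.2.2.1 t).1 : 0 ≤ ∑ t, y t).eq_or_lt with hs | hs
  · rw [← hs, zero_mul]
  refine mul_nonpos_of_nonneg_of_nonpos hs.le ?_
  calc (l - 2) / r * log (∑ t, y t) + nearOriginConst l r p
      ≤ (l - 2) / r * -(nearOriginConst l r p * r / (l - 2)) + nearOriginConst l r p := by
        gcongr
        exact (log_le_log hs hε).trans_eq (log_exp _)
    _ = 0 := by field_simp; ring

lemma continuous_fFun_add_kFun (l r : ℕ) (p : ℝ) :
    Continuous fun q : (ℝ × ℝ × (Fin (r / 2) → ℝ)) × ℝ =>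
      fFun l r q.1.1 q.1.2.1 q.1.2.2 q.2 + kFun q.1.1 q.1.2.1 q.2 p := by
  unfold fFun kFun
  fun_prop

lemma isCompact_setOf_memD (r : ℕ) :
    IsCompact {q : (ℝ × ℝ × (Fin (r / 2) → ℝ)) × ℝ |
      q.2 ∈ Set.Icc 0 1 ∧ memD r q.2 q.1.1 q.1.2.1 q.1.2.2} := by
  have hbox : IsCompact ((Set.Icc (0 : ℝ) 1 ×ˢ Set.Icc (0 : ℝ) 1 ×ˢ
      Set.univ.pi fun _ : Fin (r / 2) => Set.Icc (0 : ℝ) 1) ×ˢ Set.Icc (0 : ℝ) 1) :=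
    (isCompact_Icc.prod (isCompact_Icc.prod (isCompact_univ_pi fun _ => isCompact_Icc))).prod
      isCompact_Icc
  refine hbox.of_isClosed_subset ?_ ?_
  · simp only [memD, Set.ofPred_and, Set.ofPred_forall]
    exact (isClosed_Icc.preimage (by fun_prop)).inter <|
      (isClosed_Icc.preimage (by fun_prop)).inter <|
      (isClosed_Icc.preimage (by fun_prop)).inter <|
      (isClosed_iInter fun t => isClosed_Icc.preimage (by fun_prop)).inter <|
      (isClosed_le (by fun_prop) (by fun_prop)).inter (isClosed_eq (by fun_prop) (by fun_prop))
  · rintro ⟨⟨x₀, xc, y⟩, ρ⟩ ⟨hρ, hx₀, hxc, hy, -⟩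
    exact ⟨⟨hx₀, hxc, fun t _ => hy t⟩, hρ⟩

lemma eventually_nhds_forall_fFun_add_kFun_neg {l r : ℕ} {p ρ ε : ℝ}
    (hρ : ∀ x₀ xc (y : Fin (r / 2) → ℝ), memD r ρ x₀ xc y → ε ≤ ∑ t, y t →
      fFun l r x₀ xc y ρ + kFun x₀ xc ρ p < 0) :
    ∀ᶠ ρ' in 𝓝 ρ, ρ' ∈ Set.Icc 0 1 → ∀ x₀ xc (y : Fin (r / 2) → ℝ), memD r ρ' x₀ xc y →
      ε ≤ ∑ t, y t → fFun l r x₀ xc y ρ' + kFun x₀ xc ρ' p < 0 := by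
  -- the far, nonnegative part of the graph of `D` is compact, and misses the fibre over `ρ`
  set K := {q : (ℝ × ℝ × (Fin (r / 2) → ℝ)) × ℝ |
      q.2 ∈ Set.Icc 0 1 ∧ memD r q.2 q.1.1 q.1.2.1 q.1.2.2} ∩
    ({q | ε ≤ ∑ t, q.1.2.2 t} ∩
      {q | 0 ≤ fFun l r q.1.1 q.1.2.1 q.1.2.2 q.2 + kFun q.1.1 q.1.2.1 q.2 p})
  have hK : IsCompact K := (isCompact_setOf_memD r).inter_right <|
    (isClosed_le (by fun_prop) (by fun_prop)).inter
      (isClosed_le continuous_const (continuous_fFun_add_kFun l r p))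
  have hρK : ρ ∉ Prod.snd '' K := by
    rintro ⟨⟨⟨x₀, xc, y⟩, _⟩, ⟨⟨-, hD⟩, hε, hnonneg⟩, rfl⟩
    exact (hρ x₀ xc y hD hε).not_ge hnonneg
  filter_upwards [(hK.image continuous_snd).isClosed.isOpen_compl.mem_nhds hρK]
    with ρ' hρ' hρ'01 x₀ xc y hD hε
  by_contra! hnonneg
  exact hρ' ⟨((x₀, xc, y), ρ'), ⟨⟨hρ'01, hD⟩, hε, hnonneg⟩, rfl⟩

lemma alphaBSC_eq_zero_of_forall_nonpos {l r : ℕ} {p ρ : ℝ}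
    (h : ∀ x₀ xc (y : Fin (r / 2) → ℝ), memD r ρ x₀ xc y →
      fFun l r x₀ xc y ρ + kFun x₀ xc ρ p ≤ 0) :
    alphaBSC l r p ρ 0 = 0 := by
  refine IsGreatest.csSup_eq ⟨⟨0, 0, 0, ?_, ?_⟩, ?_⟩
  · simp [memD]
  · simp
  · rintro z ⟨x₀, xc, y, hD, rfl⟩
    simpa using h x₀ xc y hD

lemma tendsto_sqrt_log_div_self_atTop :
    Tendsto (fun n : ℕ => √(log n / n)) atTop (𝓝 0) := by
  have := (tendsto_pow_log_div_mul_add_atTop 1 0 1 one_ne_zero).comp tendsto_natCast_atTop_atTop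
  simpa only [sqrt_zero, Function.comp_def, pow_one, one_mul, add_zero] using
    (continuous_sqrt.tendsto 0).comp this

lemma Filter.Tendsto.eventually_forall_abs_le {α : Type*} {l : Filter α} {u : α → ℝ}
    (hu : Tendsto u l (𝓝 0)) {P : ℝ → Prop} {ρ : ℝ} (hP : ∀ᶠ x in 𝓝 ρ, P x) :
    ∀ᶠ a in l, ∀ δ, |δ| ≤ u a → P (ρ + δ) := by
  obtain ⟨ε, hε, hball⟩ := Metric.eventually_nhds_iff.1 hP
  filter_upwards [hu.eventually (gt_mem_nhds hε)] with a ha δ hδ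
  exact hball (by rw [Real.dist_eq, add_sub_cancel_left]; linarith)

theorem alphaBSC_stable_under_perturbation_general (l r : ℕ) (hl : 3 ≤ l) (hlr : l < r)
    (p : ℝ) (ρ : ℝ)
    (hmax : ∀ (x₀ xc : ℝ) (y : Fin (r / 2) → ℝ), memD r ρ x₀ xc y →
      ¬(x₀ = 0 ∧ xc = 0 ∧ y = 0) →
      fFun l r x₀ xc y ρ + kFun x₀ xc ρ p < fFun l r 0 0 0 ρ + kFun 0 0 ρ p) :
    ∃ N : ℕ, ∀ n : ℕ, N ≤ n → ∀ δ : ℝ,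
      -Real.sqrt (Real.log n / n) ≤ δ → δ ≤ Real.sqrt (Real.log n / n) →
      ρ + δ ∈ Set.Icc (0 : ℝ) 1 → alphaBSC l r p (ρ + δ) 0 = 0 := by
  obtain ⟨ε, hε, hnear⟩ := exists_pos_forall_fFun_add_kFun_nonpos hl (r := r) (by omega) p
  have hfar := eventually_nhds_forall_fFun_add_kFun_neg (l := l) (p := p) (ε := ε)
    fun x₀ xc y hD hεy => by
      have hy : y ≠ 0 := by rintro rfl; simp at hεy; linarith
      simpa using hmax x₀ xc y hD fun h => hy h.2.2
  have hstable : ∀ᶠ ρ' in 𝓝 ρ, ρ' ∈ Set.Icc 0 1 → alphaBSC l r p ρ' 0 = 0 :=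
    hfar.mono fun ρ' hneg hρ' => alphaBSC_eq_zero_of_forall_nonpos fun x₀ xc y hD =>
      (le_total (∑ t, y t) ε).elim (hnear ρ' x₀ xc y hρ' hD)
        fun hεy => (hneg hρ' x₀ xc y hD hεy).le
  obtain ⟨N, hN⟩ :=
    eventually_atTop.1 (tendsto_sqrt_log_div_self_atTop.eventually_forall_abs_le hstable)
  exact ⟨N, fun n hn δ h₁ h₂ => hN n hn δ (abs_le.2 ⟨h₁, h₂⟩)⟩

/-- **Lemma 2 (BSC case).**  If `α^BSC(ρ,0) = 0` and the maximum over `D(ρ)`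
is achieved only at `(0,0,0)`, then for all sufficiently large `n`, for every
`δ ∈ [-√(ln n / n), √(ln n / n)]` with `ρ + δ ∈ [0,1]`, one still has
`α^BSC(ρ+δ, 0) = 0`. -/
theorem alphaBSC_stable_under_perturbation (l r : ℕ) (hl : 3 ≤ l) (hlr : l < r)
    (p : ℝ) (hp : p ∈ Set.Ioo (0 : ℝ) 1) (ρ : ℝ) (hρ : ρ ∈ Set.Icc (0 : ℝ) 1)
    (hzero : alphaBSC l r p ρ 0 = 0)
    (hmax : ∀ (x₀ xc : ℝ) (y : Fin (r / 2) → ℝ), memD r ρ x₀ xc y →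
      ¬(x₀ = 0 ∧ xc = 0 ∧ y = 0) →
      fFun l r x₀ xc y ρ + kFun x₀ xc ρ p < fFun l r 0 0 0 ρ + kFun 0 0 ρ p) :
    ∃ N : ℕ, ∀ n : ℕ, N ≤ n → ∀ δ : ℝ,
      -Real.sqrt (Real.log n / n) ≤ δ → δ ≤ Real.sqrt (Real.log n / n) →
      ρ + δ ∈ Set.Icc (0 : ℝ) 1 → alphaBSC l r p (ρ + δ) 0 = 0 :=
  alphaBSC_stable_under_perturbation_general l r hl hlr p ρ hmax
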